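/- arXiv:2006.09583 — 4 statements merged into one kernel-verified Lean document; each statement's English description precedes it below -/
import Mathlib

section
/- Let X_1, X_2, ... be i.i.d. centered real random variables with E[exp(s X_1)] < ∞ for some s > 0, and let Q_n = X_1 + ... + X_n (Q_0 = 0). Then for any L > 0 there exist constants δ, a, b, c > 0 (depending on L and the distribution of X_1) such that for every n ∈ ℕ and every x ≥ 0, P( max_{j ≤ n} max_{k ≤ L log n + δ x} (Q_{j+k} − Q_j) ≥ c log n + x ) ≤ a e^{−b x}. -/
/-!
A Chernoff bound gives `P(Q_{j+k} - Q_j ≥ t) ≤ e^{-st} M^k` with `M = E[e^{s X_1}]`. A union bound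
over the pairs `j ≤ n`, `k ≤ T`, together with `∑_{k ≤ K} M^k ≤ (K + 1) max(M, 1)^K ≤ e^{mK}` for
`m = max(log M, 0) + 1`, bounds the probability of the maximal event by `(n + 1) e^{mT - st}`.
With `T = L log n + δx`, `t = c log n + x`, `δ = s / 2m` and `c = (Lm + 1) / s` this is
`(n + 1) e^{-log n} e^{-sx/2} ≤ 2 e^{-sx/2}`.
-/

open MeasureTheory ProbabilityTheory Real Finset

lemma sum_range_pow_le_exp {a : ℝ} (ha : 0 < a) (K : ℕ) :
    ∑ k ∈ range (K + 1), a ^ k ≤ exp (K * (max (log a) 0 + 1)) := by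
  have hterm : ∀ k ∈ range (K + 1), a ^ k ≤ exp (K * max (log a) 0) := fun k hk => by
    rw [← rpow_natCast, rpow_def_of_pos ha, exp_le_exp]
    have hkK : (k : ℝ) ≤ K := by exact_mod_cast Nat.lt_succ_iff.mp (mem_range.mp hk)
    nlinarith [le_max_left (log a) 0, le_max_right (log a) 0]
  calc ∑ k ∈ range (K + 1), a ^ k ≤ (K + 1) * exp (K * max (log a) 0) := by
        simpa using sum_le_card_nsmul _ _ _ hterm
    _ ≤ exp K * exp (K * max (log a) 0) := by gcongr; exact add_one_le_exp _
    _ = exp (K * (max (log a) 0 + 1)) := by rw [← exp_add]; ring_nf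

lemma natCast_add_one_mul_exp_neg_log_le (n : ℕ) : ((n : ℝ) + 1) * exp (-log n) ≤ 2 := by
  rcases Nat.eq_zero_or_pos n with rfl | hn
  · norm_num
  · have hn' : (1 : ℝ) ≤ n := by exact_mod_cast hn
    rw [exp_neg, exp_log (by positivity), ← div_eq_mul_inv, div_le_iff₀ (by positivity)]
    linarith

section BlockSums

variable {Ω : Type*} [MeasurableSpace Ω] {P : Measure Ω} [IsProbabilityMeasure P]
  {X : ℕ → Ω → ℝ} {s : ℝ}

lemma measureReal_sum_Ico_ge_le_exp_mul_mgf_pow (hmeas : ∀ i, Measurable (X i))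
    (hindep : iIndepFun X P) (hident : ∀ i, IdentDistrib (X i) (X 0) P P) (hs : 0 ≤ s)
    (hexp : Integrable (fun ω => exp (s * X 0 ω)) P) (t : ℝ) (j k : ℕ) :
    P.real {ω | t ≤ ∑ i ∈ Ico j (j + k), X i ω} ≤ exp (-s * t) * mgf (X 0) P s ^ k := by
  have hexp_i (i : ℕ) : Integrable (fun ω => exp (s * X i ω)) P :=
    ((hident i).comp (measurable_const_mul s).exp).integrable_iff.mpr hexp
  have hmgf : mgf (∑ i ∈ Ico j (j + k), X i) P s = mgf (X 0) P s ^ k := by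
    rw [hindep.mgf_sum hmeas,
      prod_congr rfl fun i _ => congrFun (mgf_congr_identDistrib (hident i)) s,
      prod_const, Nat.card_Ico, Nat.add_sub_cancel_left]
  simpa only [Finset.sum_apply, hmgf] using
    measure_ge_le_exp_mul_mgf (X := ∑ i ∈ Ico j (j + k), X i) t hs
      (hindep.integrable_exp_mul_sum hmeas fun i _ => hexp_i i)

lemma exists_measureReal_exists_sum_Ico_ge_le (hmeas : ∀ i, Measurable (X i))
    (hindep : iIndepFun X P) (hident : ∀ i, IdentDistrib (X i) (X 0) P P) (hs : 0 ≤ s)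
    (hexp : Integrable (fun ω => exp (s * X 0 ω)) P) :
    ∃ m : ℝ, 0 < m ∧ ∀ (n : ℕ) (T t : ℝ), 0 ≤ T →
      P.real {ω | ∃ j ≤ n, ∃ k : ℕ, (k : ℝ) ≤ T ∧ t ≤ ∑ i ∈ Ico j (j + k), X i ω}
        ≤ (n + 1) * exp (m * T - s * t) := by
  set M := mgf (X 0) P s
  have hM : 0 < M := mgf_pos hexp
  refine ⟨max (log M) 0 + 1, by positivity, fun n T t hT => ?_⟩
  set K := ⌊T⌋₊
  have hsub : {ω | ∃ j ≤ n, ∃ k : ℕ, (k : ℝ) ≤ T ∧ t ≤ ∑ i ∈ Ico j (j + k), X i ω}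
      ⊆ ⋃ j ∈ range (n + 1), ⋃ k ∈ range (K + 1), {ω | t ≤ ∑ i ∈ Ico j (j + k), X i ω} := by
    rintro ω ⟨j, hj, k, hk, hge⟩
    simp only [Set.mem_iUnion, mem_range, exists_prop]
    exact ⟨j, Nat.lt_succ_of_le hj, k, Nat.lt_succ_of_le (Nat.le_floor hk), hge⟩
  calc _ ≤ ∑ j ∈ range (n + 1), ∑ k ∈ range (K + 1),
          P.real {ω | t ≤ ∑ i ∈ Ico j (j + k), X i ω} :=
        (measureReal_mono hsub (measure_ne_top _ _)).trans <|
          (measureReal_biUnion_finset_le _ _).trans <|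
          sum_le_sum fun j _ => measureReal_biUnion_finset_le _ _
    _ ≤ ∑ _j ∈ range (n + 1), exp (-s * t) * ∑ k ∈ range (K + 1), M ^ k := by
        rw [mul_sum]
        gcongr with j _ k _
        exact measureReal_sum_Ico_ge_le_exp_mul_mgf_pow hmeas hindep hident hs hexp t j k
    _ ≤ ∑ _j ∈ range (n + 1), exp (-s * t) * exp (K * (max (log M) 0 + 1)) := by
        gcongr; exact sum_range_pow_le_exp hM K
    _ ≤ ∑ _j ∈ range (n + 1), exp (-s * t) * exp (T * (max (log M) 0 + 1)) := by
        gcongr; exact Nat.floor_le hT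
    _ = (n + 1) * exp ((max (log M) 0 + 1) * T - s * t) := by
        rw [sum_const, card_range, nsmul_eq_mul, ← exp_add]; push_cast; ring_nf

end BlockSums

theorem stmt0_general
    {Ω : Type*} [MeasurableSpace Ω] (P : Measure Ω) [IsProbabilityMeasure P]
    (X : ℕ → Ω → ℝ) (hmeas : ∀ i, Measurable (X i))
    (hindep : iIndepFun X P)
    (hident : ∀ i, IdentDistrib (X i) (X 0) P P)
    (s : ℝ) (hs : 0 < s)
    (hexp : Integrable (fun ω => Real.exp (s * X 0 ω)) P)
    (Q : ℕ → Ω → ℝ) (hQ : ∀ n ω, Q n ω = ∑ i ∈ Finset.range n, X i ω)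
    (L : ℝ) (hL : 0 < L) :
    ∃ δ a b c : ℝ, 0 < δ ∧ 0 < a ∧ 0 < b ∧ 0 < c ∧
      ∀ (n : ℕ) (x : ℝ), 0 ≤ x →
        P {ω | ∃ j ≤ n, ∃ k : ℕ, (k : ℝ) ≤ L * Real.log n + δ * x ∧
            Q (j + k) ω - Q j ω ≥ c * Real.log n + x}
          ≤ ENNReal.ofReal (a * Real.exp (-b * x)) := by
  obtain ⟨m, hm, hbound⟩ :=
    exists_measureReal_exists_sum_Ico_ge_le hmeas hindep hident hs.le hexp
  refine ⟨s / (2 * m), 2, s / 2, (L * m + 1) / s, by positivity, two_pos, by positivity,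
    by positivity, fun n x hx => ?_⟩
  have hQ_sub (j k : ℕ) (ω : Ω) : Q (j + k) ω - Q j ω = ∑ i ∈ Ico j (j + k), X i ω := by
    rw [hQ, hQ, sum_Ico_eq_sub _ (Nat.le_add_right j k)]
  have hexponent : m * (L * log n + s / (2 * m) * x) - s * ((L * m + 1) / s * log n + x)
      = -log n + -(s / 2) * x := by
    field_simp; ring
  simp only [ge_iff_le, hQ_sub]
  rw [← ofReal_measureReal]
  refine ENNReal.ofReal_le_ofReal ((hbound n _ _ (by positivity)).trans ?_)
  rw [hexponent, exp_add, ← mul_assoc]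
  gcongr
  exact natCast_add_one_mul_exp_neg_log_le n

/-- Csörgő–Steinebach type maximal inequality for i.i.d. centered sums with a
finite exponential moment. `Q n = X 1 + ... + X n` is formalized as the sum over
`Finset.range n`. -/
theorem stmt0
    {Ω : Type*} [MeasurableSpace Ω] (P : Measure Ω) [IsProbabilityMeasure P]
    (X : ℕ → Ω → ℝ) (hmeas : ∀ i, Measurable (X i))
    (hindep : iIndepFun X P)
    (hident : ∀ i, IdentDistrib (X i) (X 0) P P)
    (hcent : ∫ ω, X 0 ω ∂P = 0)
    (s : ℝ) (hs : 0 < s)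
    (hexp : Integrable (fun ω => Real.exp (s * X 0 ω)) P)
    (Q : ℕ → Ω → ℝ) (hQ : ∀ n ω, Q n ω = ∑ i ∈ Finset.range n, X i ω)
    (L : ℝ) (hL : 0 < L) :
    ∃ δ a b c : ℝ, 0 < δ ∧ 0 < a ∧ 0 < b ∧ 0 < c ∧
      ∀ (n : ℕ) (x : ℝ), 0 ≤ x →
        P {ω | ∃ j ≤ n, ∃ k : ℕ, (k : ℝ) ≤ L * Real.log n + δ * x ∧
            Q (j + k) ω - Q j ω ≥ c * Real.log n + x}
          ≤ ENNReal.ofReal (a * Real.exp (-b * x)) :=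
  stmt0_general P X hmeas hindep hident s hs hexp Q hQ L hL
end

section
/- Let Z be a standard one-dimensional Wiener process and N a Poisson process with rate λ > 0, with Z and N independent. Then for all t ≥ e and x ≥ 1, P( sup_{0 ≤ u ≤ t} |Z_{N(u)} − Z_{N(⌊u⌋)}| ≥ log t + x ) ≤ 2 e^{λ(e²−1)} e^{−x} + 8 e^{−x}. -/
open MeasureTheory ProbabilityTheory Real

/-- A standard one-dimensional Wiener process. -/
def IsBrownianMotion {Ω : Type*} [MeasurableSpace Ω] (P : Measure Ω)
    (W : ℝ → Ω → ℝ) : Prop :=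
  (∀ t, Measurable (W t)) ∧
  (∀ᵐ ω ∂P, W 0 ω = 0) ∧
  (∀ᵐ ω ∂P, Continuous fun t => W t ω) ∧
  (∀ s t : ℝ, 0 ≤ s → s ≤ t →
    Measure.map (fun ω => W t ω - W s ω) P = gaussianReal 0 (t - s).toNNReal) ∧
  (∀ (t : ℕ → ℝ), Monotone t → 0 ≤ t 0 →
    iIndepFun (fun i ω => W (t (i + 1)) ω - W (t i) ω) P)

/-- A homogeneous Poisson process with rate `λ`: starts at `0`, nondecreasing paths,
Poisson-distributed increments and independent increments. -/
def IsPoissonProcess {Ω : Type*} [MeasurableSpace Ω] (P : Measure Ω)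
    (N : ℝ → Ω → ℕ) (lam : ℝ) : Prop :=
  (∀ t, Measurable (N t)) ∧
  (∀ᵐ ω ∂P, N 0 ω = 0) ∧
  (∀ᵐ ω ∂P, ∀ s t : ℝ, 0 ≤ s → s ≤ t → N s ω ≤ N t ω) ∧
  (∀ s t : ℝ, 0 ≤ s → s ≤ t →
    Measure.map (fun ω => N t ω - N s ω) P = poissonMeasure (lam * (t - s)).toNNReal) ∧
  (∀ (t : ℕ → ℝ), Monotone t → 0 ≤ t 0 →
    iIndepFun (fun i ω => N (t (i + 1)) ω - N (t i) ω) P)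

open scoped NNReal ENNReal

/-!
Put `a = log t + x`, `m = ⌊a / 2⌋₊` and cut `[0, t]` into the `⌊t⌋₊ + 1` unit blocks `[k, k + 1]`.
If `|Z (N u) - Z (N ⌊u⌋)| ≥ a` for some `u` in block `k`, then either `N` jumps more than `m`
times on `[k, k + 1]`, which by the Chernoff bound (at `θ = 2`) for the Poisson law has probability
at most `e^{λ(e² - 1)} e^{-a}`, or `Z` moves by `a` within `j ≤ m` unit steps after the random
time `N k`. Since `N k` is independent of `Z`, the Gaussian tail `2 exp (-a² / 2j)`, which is
at most `2 e^{-a} e^{-2(m - j)}`, bounds the latter by `4 e^{-a}`. A union bound over the blocks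
gives `(⌊t⌋₊ + 1) (e^{λ(e² - 1)} + 4) e^{-a} ≤ 2 (e^{λ(e² - 1)} + 4) e^{-x}`.
-/

namespace ProbabilityTheory

lemma HasSubgaussianMGF.measureReal_abs_ge_le {Ω : Type*} {mΩ : MeasurableSpace Ω}
    {μ : Measure Ω} [IsFiniteMeasure μ] {X : Ω → ℝ} {c : ℝ≥0}
    (h : HasSubgaussianMGF X c μ) {ε : ℝ} (hε : 0 ≤ ε) :
    μ.real {ω | ε ≤ |X ω|} ≤ 2 * exp (-ε ^ 2 / (2 * c)) := by
  have hsub : {ω | ε ≤ |X ω|} ⊆ {ω | ε ≤ X ω} ∪ {ω | ε ≤ (-X) ω} :=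
    fun _ hω ↦ le_abs.mp (Set.mem_ofPred.mp hω)
  calc μ.real {ω | ε ≤ |X ω|}
      ≤ μ.real {ω | ε ≤ X ω} + μ.real {ω | ε ≤ (-X) ω} :=
        (measureReal_mono hsub).trans (measureReal_union_le _ _)
    _ ≤ exp (-ε ^ 2 / (2 * c)) + exp (-ε ^ 2 / (2 * c)) :=
        add_le_add (h.measure_ge_le hε) (h.neg.measure_ge_le hε)
    _ = 2 * exp (-ε ^ 2 / (2 * c)) := by ring

lemma hasSubgaussianMGF_id_gaussianReal (v : ℝ≥0) :
    HasSubgaussianMGF id v (gaussianReal 0 v) :=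
  ⟨integrable_exp_mul_gaussianReal, fun t ↦ by simp [mgf_id_gaussianReal]⟩

lemma hasSum_mgf_natCast_poissonMeasure (r : ℝ≥0) (θ : ℝ) :
    HasSum (fun n : ℕ ↦ exp (-r) * r ^ n / n.factorial * exp (θ * n))
      (exp (r * (exp θ - 1))) := by
  have h := (NormedSpace.expSeries_div_hasSum_exp (r * exp θ : ℝ)).mul_left (exp (-r))
  rw [← exp_eq_exp_ℝ, ← exp_add] at h
  rw [show (r : ℝ) * (exp θ - 1) = -r + r * exp θ by ring]
  convert h using 2 with n
  · rfl
  · rw [mul_pow, ← exp_nat_mul, mul_comm (n : ℝ) θ]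
    ring

lemma mgf_natCast_poissonMeasure (r : ℝ≥0) (θ : ℝ) :
    mgf (fun n : ℕ ↦ (n : ℝ)) (poissonMeasure r) θ = exp (r * (exp θ - 1)) := by
  rw [mgf, integral_poissonMeasure]
  simpa [smul_eq_mul] using (hasSum_mgf_natCast_poissonMeasure r θ).tsum_eq

lemma poissonMeasure_real_Ici_le (r : ℝ≥0) (M : ℕ) {θ : ℝ} (hθ : 0 ≤ θ) :
    (poissonMeasure r).real (Set.Ici M) ≤ exp (r * (exp θ - 1) - θ * M) := by
  have hint : Integrable (fun n : ℕ ↦ exp (θ * n)) (poissonMeasure r) := by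
    refine integrable_poissonMeasure_iff.mpr ?_
    simpa [Real.norm_eq_abs, abs_of_pos (exp_pos _)] using
      (hasSum_mgf_natCast_poissonMeasure r θ).summable
  have h := measure_ge_le_exp_mul_mgf (M : ℝ) hθ hint
  rw [mgf_natCast_poissonMeasure] at h
  convert h using 2
  · ext n; simp
  · rw [← exp_add]; ring_nf

lemma measure_mem_preimage_le_of_indepFun {Ω β : Type*} {mΩ : MeasurableSpace Ω}
    [MeasurableSpace β] {μ : Measure Ω} [IsProbabilityMeasure μ] {X : Ω → ℕ} {Y : Ω → β}
    (hXY : IndepFun X Y μ) (hX : Measurable X) {S : ℕ → Set β}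
    (hS : ∀ n, MeasurableSet (S n)) {c : ℝ≥0∞} (hc : ∀ n, μ (Y ⁻¹' S n) ≤ c) :
    μ {ω | Y ω ∈ S (X ω)} ≤ c := by
  have hfib : ∑' n, μ (X ⁻¹' {n}) = 1 := by
    rw [← measure_iUnion (fun i j hij ↦ (Set.disjoint_singleton.2 hij).preimage X)
      (fun n ↦ hX (measurableSet_singleton n)), ← Set.preimage_iUnion, Set.iUnion_of_singleton,
      Set.preimage_univ, measure_univ]
  calc μ {ω | Y ω ∈ S (X ω)} = μ (⋃ n, X ⁻¹' {n} ∩ Y ⁻¹' S n) := by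
        congr 1; ext ω; simp
    _ ≤ ∑' n, μ (X ⁻¹' {n} ∩ Y ⁻¹' S n) := measure_iUnion_le _
    _ = ∑' n, μ (X ⁻¹' {n}) * μ (Y ⁻¹' S n) := by
        congr with n
        exact hXY.measure_inter_preimage_eq_mul _ _ (measurableSet_singleton n) (hS n)
    _ ≤ ∑' n, μ (X ⁻¹' {n}) * c := ENNReal.tsum_le_tsum fun n ↦ mul_le_mul_right (hc n) _
    _ = c := by rw [ENNReal.tsum_mul_right, hfib, one_mul]

end ProbabilityTheory

-- With `J = j + 1`: `a² / 2J ≥ 2a - 2J ≥ a + 2(m - J)`, since `(a - 2J)² ≥ 0` and `2m ≤ a`.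
lemma exp_neg_sq_div_le {a : ℝ} {m j : ℕ} (hj : j < m) (hm : 2 * m ≤ a) :
    exp (-a ^ 2 / (2 * (j + 1))) ≤ exp (-a) * exp (-2) ^ (m - 1 - j) := by
  rw [← exp_nat_mul, ← exp_add, exp_le_exp, Nat.cast_sub (by omega), Nat.cast_sub (by omega)]
  have hJ : (0 : ℝ) < j + 1 := by positivity
  rw [neg_div, neg_le, le_div_iff₀ (by positivity)]
  push_cast
  nlinarith [sq_nonneg (a - 2 * (j + 1))]

lemma sum_range_exp_neg_two_pow_le (m : ℕ) :
    ∑ j ∈ Finset.range m, exp (-2) ^ (m - 1 - j) ≤ 2 := by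
  have h : exp (-2) ≤ 1 / 2 := by
    rw [exp_neg, one_div]
    exact inv_anti₀ (by norm_num) (by linarith [add_one_le_exp (2 : ℝ)])
  rw [Finset.sum_range_reflect (fun j ↦ exp (-2) ^ j) m]
  exact (Finset.sum_le_sum fun j _ ↦ pow_le_pow_left₀ (exp_pos _).le h j).trans
    (sum_geometric_two_le m)

namespace IsBrownianMotion

variable {Ω : Type*} [MeasurableSpace Ω] {P : Measure Ω} {Z : ℝ → Ω → ℝ}

lemma measure_abs_sub_ge_le (hZ : IsBrownianMotion P Z) {s t : ℝ} (hs : 0 ≤ s) (hst : s ≤ t)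
    {ε : ℝ} (hε : 0 ≤ ε) :
    P {ω | ε ≤ |Z t ω - Z s ω|} ≤ ENNReal.ofReal (2 * exp (-ε ^ 2 / (2 * (t - s)))) := by
  have hmeas : Measurable fun ω ↦ Z t ω - Z s ω := (hZ.1 t).sub (hZ.1 s)
  have hset : MeasurableSet {y : ℝ | ε ≤ |y|} := measurableSet_le measurable_const measurable_abs
  have hlaw := hZ.2.2.2.1 s t hs hst
  have htail := (hasSubgaussianMGF_id_gaussianReal (t - s).toNNReal).measureReal_abs_ge_le hε
  rw [Real.coe_toNNReal _ (sub_nonneg.2 hst)] at htail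
  calc P {ω | ε ≤ |Z t ω - Z s ω|}
      = gaussianReal 0 (t - s).toNNReal {y | ε ≤ |y|} := by
        rw [← hlaw, Measure.map_apply hmeas hset]; rfl
    _ ≤ _ := by
        rw [← ofReal_measureReal]
        exact ENNReal.ofReal_le_ofReal htail

lemma measure_exists_abs_sub_ge_le (hZ : IsBrownianMotion P Z) {s : ℝ} (hs : 0 ≤ s) {a : ℝ}
    {m : ℕ} (hm : 2 * m ≤ a) :
    P {ω | ∃ j < m, a ≤ |Z (s + (j + 1)) ω - Z s ω|} ≤ ENNReal.ofReal (4 * exp (-a)) := by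
  have ha : 0 ≤ a := le_trans (by positivity) hm
  have hj : ∀ j ∈ Finset.range m, P {ω | a ≤ |Z (s + (j + 1)) ω - Z s ω|}
      ≤ ENNReal.ofReal (2 * exp (-a) * exp (-2) ^ (m - 1 - j)) := by
    intro j hj
    refine (hZ.measure_abs_sub_ge_le hs (by linarith) ha).trans (ENNReal.ofReal_le_ofReal ?_)
    rw [add_sub_cancel_left, mul_assoc]
    exact mul_le_mul_of_nonneg_left (exp_neg_sq_div_le (Finset.mem_range.1 hj) hm) zero_le_two
  calc P {ω | ∃ j < m, a ≤ |Z (s + (j + 1)) ω - Z s ω|}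
      = P (⋃ j ∈ Finset.range m, {ω | a ≤ |Z (s + (j + 1)) ω - Z s ω|}) := by
        congr 1; ext ω; simp
    _ ≤ ∑ j ∈ Finset.range m, ENNReal.ofReal (2 * exp (-a) * exp (-2) ^ (m - 1 - j)) :=
        (measure_biUnion_finset_le _ _).trans (Finset.sum_le_sum hj)
    _ = ENNReal.ofReal (2 * exp (-a) * ∑ j ∈ Finset.range m, exp (-2) ^ (m - 1 - j)) := by
        rw [Finset.mul_sum, ENNReal.ofReal_sum_of_nonneg fun j _ ↦ by positivity]
    _ ≤ ENNReal.ofReal (4 * exp (-a)) := by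
        refine ENNReal.ofReal_le_ofReal ?_
        nlinarith [sum_range_exp_neg_two_pow_le m, exp_pos (-a)]

lemma measure_exists_abs_sub_ge_le_of_indepFun [IsProbabilityMeasure P]
    (hZ : IsBrownianMotion P Z) {X : Ω → ℕ} (hX : Measurable X)
    (hXZ : IndepFun X (fun ω t ↦ Z t ω) P) {a : ℝ} {m : ℕ}
    (hm : 2 * m ≤ a) :
    P {ω | ∃ j < m, a ≤ |Z (X ω + (j + 1)) ω - Z (X ω) ω|} ≤ ENNReal.ofReal (4 * exp (-a)) := by
  let S : ℕ → Set (ℝ → ℝ) := fun n ↦ {f | ∃ j < m, a ≤ |f (n + (j + 1)) - f n|}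
  have hS : ∀ n, MeasurableSet (S n) := fun n ↦ by
    have hSn : S n = ⋃ j ∈ Finset.range m, {f | a ≤ |f (n + (j + 1)) - f n|} := by
      ext; simp [S]
    rw [hSn]
    exact Finset.measurableSet_biUnion _ fun j _ ↦ measurableSet_le measurable_const (by fun_prop)
  exact measure_mem_preimage_le_of_indepFun hXZ hX hS fun n ↦
    hZ.measure_exists_abs_sub_ge_le (Nat.cast_nonneg n) hm

end IsBrownianMotion

lemma IsPoissonProcess.measure_sub_ge_le {Ω : Type*} [MeasurableSpace Ω] {P : Measure Ω}
    {N : ℝ → Ω → ℕ} {lam : ℝ} (hN : IsPoissonProcess P N lam) (hlam : 0 ≤ lam) {s t : ℝ}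
    (hs : 0 ≤ s) (hst : s ≤ t) (M : ℕ) {θ : ℝ} (hθ : 0 ≤ θ) :
    P {ω | M ≤ N t ω - N s ω}
      ≤ ENNReal.ofReal (exp (lam * (t - s) * (exp θ - 1) - θ * M)) := by
  have hmeas : Measurable fun ω ↦ N t ω - N s ω := (hN.1 t).sub (hN.1 s)
  have hlaw := hN.2.2.2.1 s t hs hst
  have htail := poissonMeasure_real_Ici_le (lam * (t - s)).toNNReal M hθ
  rw [Real.coe_toNNReal _ (mul_nonneg hlam (sub_nonneg.2 hst))] at htail
  calc P {ω | M ≤ N t ω - N s ω} = poissonMeasure (lam * (t - s)).toNNReal (Set.Ici M) := by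
        rw [← hlaw, Measure.map_apply hmeas measurableSet_Ici]; rfl
    _ ≤ _ := by
        rw [← ofReal_measureReal]
        exact ENNReal.ofReal_le_ofReal htail

lemma exists_jump_or_abs_sub_ge {z : ℝ → ℝ} {n : ℝ → ℕ} (hn : MonotoneOn n (Set.Ici 0))
    {a : ℝ} (ha : 0 < a) (m : ℕ) {u : ℝ} (hu : 0 ≤ u) (h : a ≤ |z (n u) - z (n ⌊u⌋)|) :
    m + 1 ≤ n (⌊u⌋₊ + 1) - n ⌊u⌋₊ ∨ ∃ j < m, a ≤ |z (n ⌊u⌋₊ + (j + 1)) - z (n ⌊u⌋₊)| := by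
  rw [← natCast_floor_eq_intCast_floor hu] at h
  have hk : n ⌊u⌋₊ ≤ n u := hn (Set.mem_Ici.2 (Nat.cast_nonneg _)) hu (Nat.floor_le hu)
  have hk1 : n u ≤ n (⌊u⌋₊ + 1) :=
    hn hu (Set.mem_Ici.2 (by positivity)) (Nat.lt_floor_add_one u).le
  have hne : n ⌊u⌋₊ ≠ n u := by
    intro heq
    rw [heq, sub_self, abs_zero] at h
    exact ha.not_ge h
  rcases le_or_gt (m + 1) (n (⌊u⌋₊ + 1) - n ⌊u⌋₊) with hjump | hjump
  · exact Or.inl hjump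
  · refine Or.inr ⟨n u - n ⌊u⌋₊ - 1, by omega, ?_⟩
    have hsum : n u = n ⌊u⌋₊ + (n u - n ⌊u⌋₊ - 1 + 1) := by omega
    rw [hsum] at h
    push_cast at h
    exact h

def jumpsOrSwingEvent {Ω : Type*} (Z : ℝ → Ω → ℝ) (N : ℝ → Ω → ℕ) (a : ℝ) (m k : ℕ) :
    Set Ω :=
  {ω | m + 1 ≤ N (k + 1) ω - N k ω} ∪ {ω | ∃ j < m, a ≤ |Z (N k ω + (j + 1)) ω - Z (N k ω) ω|}

lemma measure_jumpsOrSwingEvent_le {Ω : Type*} [MeasurableSpace Ω] {P : Measure Ω}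
    [IsProbabilityMeasure P] {Z : ℝ → Ω → ℝ} (hZ : IsBrownianMotion P Z) {lam : ℝ}
    {N : ℝ → Ω → ℕ} (hN : IsPoissonProcess P N lam) (hlam : 0 ≤ lam)
    (hindep : IndepFun (fun ω t ↦ Z t ω) (fun ω t ↦ N t ω) P) (k : ℕ) {a : ℝ} {m : ℕ}
    (hm : 2 * m ≤ a) (hm1 : a ≤ 2 * (m + 1)) :
    P (jumpsOrSwingEvent Z N a m k)
      ≤ ENNReal.ofReal ((exp (lam * (exp 2 - 1)) + 4) * exp (-a)) := by
  have hjump := hN.measure_sub_ge_le hlam (Nat.cast_nonneg k)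
    (le_add_of_nonneg_right zero_le_one) (m + 1) zero_le_two
  have hswing := hZ.measure_exists_abs_sub_ge_le_of_indepFun (hN.1 k)
    (hindep.symm.comp (measurable_pi_apply (k : ℝ)) measurable_id) hm
  refine (measure_union_le _ _).trans ?_
  rw [add_mul, ENNReal.ofReal_add (by positivity) (by positivity)]
  refine add_le_add (hjump.trans (ENNReal.ofReal_le_ofReal ?_)) hswing
  rw [← exp_add, exp_le_exp]
  push_cast
  linarith

lemma natFloor_add_one_mul_exp_neg_log_add_le {t : ℝ} (ht : 1 ≤ t) (x : ℝ) :
    (⌊t⌋₊ + 1) * exp (-(log t + x)) ≤ 2 * exp (-x) := by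
  have ht0 : 0 < t := by linarith
  rw [neg_add, exp_add, exp_neg (log t), exp_log ht0, ← mul_assoc]
  refine mul_le_mul_of_nonneg_right ?_ (exp_pos _).le
  rw [← div_eq_mul_inv, div_le_iff₀ ht0]
  linarith [Nat.floor_le ht0.le]

/-- for a Wiener process `Z` independent of a Poisson process `N` of rate `λ`,
for `t ≥ e`, `x ≥ 1`:
`P( sup_{0 ≤ u ≤ t} |Z_{N(u)} − Z_{N(⌊u⌋)}| ≥ log t + x ) ≤ 2 e^{λ(e²−1)} e^{−x} + 8 e^{−x}`. -/
theorem stmt3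
    {Ω : Type*} [MeasurableSpace Ω] (P : Measure Ω) [IsProbabilityMeasure P]
    (Z : ℝ → Ω → ℝ) (hZ : IsBrownianMotion P Z)
    (lam : ℝ) (hlam : 0 < lam)
    (N : ℝ → Ω → ℕ) (hN : IsPoissonProcess P N lam)
    (hindep : IndepFun (fun ω => (fun t : ℝ => Z t ω))
      (fun ω => (fun t : ℝ => N t ω)) P) :
    ∀ t x : ℝ, Real.exp 1 ≤ t → 1 ≤ x →
      P {ω | ∃ u : ℝ, 0 ≤ u ∧ u ≤ t ∧
          |Z (N u ω : ℝ) ω - Z (N (⌊u⌋ : ℝ) ω : ℝ) ω| ≥ Real.log t + x}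
        ≤ ENNReal.ofReal (2 * Real.exp (lam * (Real.exp 2 - 1)) * Real.exp (-x)
            + 8 * Real.exp (-x)) := by
  intro t x ht hx
  have ht1 : 1 ≤ t := le_trans (by linarith [add_one_le_exp (1 : ℝ)]) ht
  set a := log t + x
  have ha : 0 < a := by linarith [log_nonneg ht1]
  set m := ⌊a / 2⌋₊
  have hm : 2 * m ≤ a := by linarith [Nat.floor_le (half_pos ha).le]
  have hm1 : a ≤ 2 * (m + 1) := by linarith [Nat.lt_floor_add_one (a / 2)]
  have hcover : {ω | ∃ u : ℝ, 0 ≤ u ∧ u ≤ t ∧ |Z (N u ω : ℝ) ω - Z (N (⌊u⌋ : ℝ) ω : ℝ) ω| ≥ a}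
      ≤ᵐ[P] ⋃ k ∈ Finset.range (⌊t⌋₊ + 1), jumpsOrSwingEvent Z N a m k := by
    filter_upwards [hN.2.2.1] with ω hmono ⟨u, hu, hut, hω⟩
    refine Set.mem_biUnion (Finset.mem_range.2 (Nat.lt_succ_of_le (Nat.floor_le_floor hut))) ?_
    exact exists_jump_or_abs_sub_ge (z := (Z · ω)) (n := (N · ω))
      (fun s hs u hu hsu ↦ hmono s u hs hsu) ha m hu hω
  calc _ ≤ ∑ k ∈ Finset.range (⌊t⌋₊ + 1), P (jumpsOrSwingEvent Z N a m k) :=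
        (measure_mono_ae hcover).trans (measure_biUnion_finset_le _ _)
    _ ≤ (Finset.range (⌊t⌋₊ + 1)).card •
          ENNReal.ofReal ((exp (lam * (exp 2 - 1)) + 4) * exp (-a)) :=
        Finset.sum_le_card_nsmul _ _ _ fun k _ ↦
          measure_jumpsOrSwingEvent_le hZ hN hlam.le hindep k hm hm1
    _ ≤ _ := by
        rw [Finset.card_range, nsmul_eq_mul, ← ENNReal.ofReal_natCast,
          ← ENNReal.ofReal_mul (by positivity)]
        refine ENNReal.ofReal_le_ofReal ?_
        push_cast
        nlinarith [natFloor_add_one_mul_exp_neg_log_add_le ht1 x, exp_pos (lam * (exp 2 - 1))]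
end

section
/- Let (ξ_k, τ_k), k ≥ 1, be i.i.d. with ξ_k ∈ ℝ^d, τ_k ≥ 0, E τ_1 = μ, κ = E ξ_1/μ, and suppose s_1 > 0 and r > 0 satisfy E exp(s_1 |ξ_1 − κ τ_1|) < ∞ and r log E exp(s_1 |ξ_1 − κ τ_1|) < s_1/6. Set T_k = τ_1 + ... + τ_k and S_k = ξ_1 + ... + ξ_k. Then for all x > 0, P( max_{k ≤ r x} |S_k − κ T_k| > x/6 ) ≤ 2d e^{−q x}, where q = s_1/6 − r log E exp(s_1 |ξ_1 − κ τ_1|) > 0. -/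
open MeasureTheory ProbabilityTheory Real Finset

/-!
Each partial sum `S_k − κ T_k` with `k ≤ r x` has norm at most `∑_{i ≤ ⌊r x⌋} ‖ξ_i − κ τ_i‖`,
a sum of `⌊r x⌋` i.i.d. nonnegative variables. The Chernoff bound at `s₁` gives
`P(that sum ≥ x / 6) ≤ e^{−s₁ x / 6} M^{⌊r x⌋} ≤ e^{−s₁ x / 6 + r x log M} = e^{−q x}`,
where `M = E exp(s₁ ‖ξ_1 − κ τ_1‖) ≥ 1`; this is already below `2 d e^{−q x}`.
-/

lemma norm_sum_le_sum_norm_of_subset {ι E : Type*} [SeminormedAddCommGroup E]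
    {s t : Finset ι} (hst : s ⊆ t) (v : ι → E) :
    ‖∑ i ∈ s, v i‖ ≤ ∑ i ∈ t, ‖v i‖ :=
  (norm_sum_le s v).trans
    (sum_le_sum_of_subset_of_nonneg hst fun i _ _ => norm_nonneg (v i))

lemma pow_le_exp_mul_log {M y : ℝ} (hM : 1 ≤ M) {n : ℕ} (hn : (n : ℝ) ≤ y) :
    M ^ n ≤ exp (y * log M) := by
  rw [← rpow_natCast, mul_comm, ← rpow_def_of_pos (one_pos.trans_le hM)]
  exact rpow_le_rpow_of_exponent_le hM hn

section Probability

variable {Ω : Type*} [MeasurableSpace Ω] {P : Measure Ω} [IsProbabilityMeasure P]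

lemma one_le_mgf_of_nonneg {X : Ω → ℝ} (hX : ∀ ω, 0 ≤ X ω) {t : ℝ} (ht : 0 ≤ t)
    (hint : Integrable (fun ω => exp (t * X ω)) P) :
    1 ≤ mgf X P t := by
  calc (1 : ℝ) = ∫ _, (1 : ℝ) ∂P := by simp
    _ ≤ mgf X P t :=
      integral_mono (integrable_const 1) hint fun ω => one_le_exp (mul_nonneg ht (hX ω))

lemma measureReal_sum_ge_le_exp_mul_mgf_pow {ι : Type*} {Y : ι → Ω → ℝ} {Z : Ω → ℝ}
    (hmeas : ∀ i, Measurable (Y i)) (hindep : iIndepFun Y P)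
    (hident : ∀ i, IdentDistrib (Y i) Z P P) {t : ℝ} (ht : 0 ≤ t)
    (hint : Integrable (fun ω => exp (t * Z ω)) P) (s : Finset ι) (a : ℝ) :
    P.real {ω | a ≤ ∑ i ∈ s, Y i ω} ≤ exp (-t * a) * mgf Z P t ^ #s := by
  have hintY : ∀ i ∈ s, Integrable (fun ω => exp (t * Y i ω)) P := fun i _ =>
    ((hident i).comp (measurable_const_mul t).exp).integrable_iff.mpr hint
  have hmgf : mgf (∑ i ∈ s, Y i) P t = mgf Z P t ^ #s := by
    rw [hindep.mgf_sum hmeas]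
    exact prod_eq_pow_card fun i _ => mgf_congr_of_identDistrib _ _ (hident i) t
  simpa only [Finset.sum_apply, hmgf] using
    measure_ge_le_exp_mul_mgf a ht (hindep.integrable_exp_mul_sum hmeas hintY)

end Probability

theorem stmt9_general
    {Ω : Type*} [MeasurableSpace Ω] (P : Measure Ω) [IsProbabilityMeasure P]
    (d : ℕ) (hd : 0 < d)
    (ξ : ℕ → Ω → Fin d → ℝ) (τ : ℕ → Ω → ℝ)
    (hξmeas : ∀ k, Measurable (ξ k)) (hτmeas : ∀ k, Measurable (τ k))
    (hindep : iIndepFun (fun k ω => (ξ k ω, τ k ω)) P)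
    (hident : ∀ k, IdentDistrib (fun ω => (ξ k ω, τ k ω)) (fun ω => (ξ 1 ω, τ 1 ω)) P P)
    (κ : Fin d → ℝ)
    (s₁ r : ℝ) (hs₁ : 0 < s₁) (hr : 0 < r)
    (hint : Integrable (fun ω => Real.exp (s₁ * ‖ξ 1 ω - τ 1 ω • κ‖)) P)
    (q : ℝ) (hq : q = s₁ / 6
        - r * Real.log (∫ ω, Real.exp (s₁ * ‖ξ 1 ω - τ 1 ω • κ‖) ∂P)) :
    ∀ x : ℝ, 0 < x →
      P {ω | ∃ k : ℕ, 1 ≤ k ∧ (k : ℝ) ≤ r * x ∧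
          ‖(∑ i ∈ Finset.Icc 1 k, ξ i ω) - (∑ i ∈ Finset.Icc 1 k, τ i ω) • κ‖ > x / 6}
        ≤ ENNReal.ofReal (2 * d * Real.exp (-q * x)) := by
  intro x hx
  set g : (Fin d → ℝ) × ℝ → ℝ := fun p => ‖p.1 - p.2 • κ‖
  have hg : Measurable g := by fun_prop
  set Y : ℕ → Ω → ℝ := fun i ω => g (ξ i ω, τ i ω)
  have hYmeas : ∀ i, Measurable (Y i) := fun i => hg.comp ((hξmeas i).prodMk (hτmeas i))
  have hM : 1 ≤ mgf (Y 1) P s₁ := one_le_mgf_of_nonneg (fun _ => norm_nonneg _) hs₁.le hint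
  set n := ⌊r * x⌋₊
  have hsub : {ω | ∃ k : ℕ, 1 ≤ k ∧ (k : ℝ) ≤ r * x ∧
      ‖(∑ i ∈ Icc 1 k, ξ i ω) - (∑ i ∈ Icc 1 k, τ i ω) • κ‖ > x / 6}
      ⊆ {ω | x / 6 ≤ ∑ i ∈ Icc 1 n, Y i ω} := by
    rintro ω ⟨k, -, hk, hgt⟩
    rw [sum_smul, ← sum_sub_distrib] at hgt
    exact hgt.le.trans (norm_sum_le_sum_norm_of_subset (Icc_subset_Icc_right (Nat.le_floor hk)) _)
  have hchernoff : P.real {ω | x / 6 ≤ ∑ i ∈ Icc 1 n, Y i ω} ≤ exp (-q * x) :=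
    calc _ ≤ exp (-s₁ * (x / 6)) * mgf (Y 1) P s₁ ^ n := by
          simpa only [Nat.card_Icc, add_tsub_cancel_right] using
            measureReal_sum_ge_le_exp_mul_mgf_pow (Z := Y 1) hYmeas
              (hindep.comp (fun _ => g) fun _ => hg) (fun i => (hident i).comp hg) hs₁.le hint
              (Icc 1 n) (x / 6)
      _ ≤ exp (-s₁ * (x / 6)) * exp (r * x * log (mgf (Y 1) P s₁)) := by
          gcongr
          exact pow_le_exp_mul_log hM (Nat.floor_le (by positivity))
      _ = exp (-q * x) := by rw [← exp_add, hq]; ring_nf; rfl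
  calc _ ≤ P {ω | x / 6 ≤ ∑ i ∈ Icc 1 n, Y i ω} := measure_mono hsub
    _ = ENNReal.ofReal (P.real {ω | x / 6 ≤ ∑ i ∈ Icc 1 n, Y i ω}) := (ofReal_measureReal).symm
    _ ≤ ENNReal.ofReal (2 * d * exp (-q * x)) := by
      gcongr
      have : (1 : ℝ) ≤ d := Nat.one_le_cast.mpr hd
      nlinarith [exp_pos (-q * x)]

/-- Doob-type maximal bound in the large-deviation zone for the random walk
`S_k − κ T_k` with i.i.d. increments `ξ_i − κ τ_i`. The norm on `Fin d → ℝ` is the sup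
(max) norm. -/
theorem stmt9
    {Ω : Type*} [MeasurableSpace Ω] (P : Measure Ω) [IsProbabilityMeasure P]
    (d : ℕ) (hd : 0 < d)
    (ξ : ℕ → Ω → Fin d → ℝ) (τ : ℕ → Ω → ℝ)
    (hξmeas : ∀ k, Measurable (ξ k)) (hτmeas : ∀ k, Measurable (τ k))
    (hτnonneg : ∀ k, ∀ᵐ ω ∂P, 0 ≤ τ k ω)
    (hindep : iIndepFun (fun k ω => (ξ k ω, τ k ω)) P)
    (hident : ∀ k, IdentDistrib (fun ω => (ξ k ω, τ k ω)) (fun ω => (ξ 1 ω, τ 1 ω)) P P)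
    (μ0 : ℝ) (hμ0def : μ0 = ∫ ω, τ 1 ω ∂P) (hμ0 : 0 < μ0)
    (κ : Fin d → ℝ) (hκ : κ = fun i => (∫ ω, ξ 1 ω i ∂P) / μ0)
    (s₁ r : ℝ) (hs₁ : 0 < s₁) (hr : 0 < r)
    (hint : Integrable (fun ω => Real.exp (s₁ * ‖ξ 1 ω - τ 1 ω • κ‖)) P)
    (hsmall : r * Real.log (∫ ω, Real.exp (s₁ * ‖ξ 1 ω - τ 1 ω • κ‖) ∂P) < s₁ / 6)
    (q : ℝ) (hq : q = s₁ / 6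
        - r * Real.log (∫ ω, Real.exp (s₁ * ‖ξ 1 ω - τ 1 ω • κ‖) ∂P)) :
    ∀ x : ℝ, 0 < x →
      P {ω | ∃ k : ℕ, 1 ≤ k ∧ (k : ℝ) ≤ r * x ∧
          ‖(∑ i ∈ Finset.Icc 1 k, ξ i ω) - (∑ i ∈ Finset.Icc 1 k, τ i ω) • κ‖ > x / 6}
        ≤ ENNReal.ofReal (2 * d * Real.exp (-q * x)) :=
  stmt9_general P d hd ξ τ hξmeas hτmeas hindep hident κ s₁ r hs₁ hr hint q hq
end

section
/- Let B be a standard d-dimensional Wiener process. Then for all t ≥ e and x ≥ 0, P( sup_{u ≤ t} |W*_{N(y(u))} − W*_{u/γ}| > 3d log t + x ) ≤ 4(γ^{-1} + e^{-1}) e^{1/2 − x/(3d)}, whenever the time arguments satisfy |u/γ − N(y(u))| ≤ 1 for all u, where y(u) = N^{-1}(u/γ), W* is a standard d-dimensional Wiener process, N a Poisson process, and γ > 0. -/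
/-!
Since `|u/γ − N(y(u))| ≤ 1`, both time points `N(y(u))` and `u/γ` lie in a window `[j, j + 2]`
with `j ∈ ℕ`, `j ≤ t/γ`, so the event is covered by the `d (⌊t/γ⌋ + 1)` events that a coordinate
of `W*` moves by more than `c/2` inside such a window, where `c = 3 d log t + x`. Each of these has
probability at most `4 exp (-c²/16)`: by path continuity it suffices to look at dyadic grids, where
Lévy's maximal inequality reduces the maximum to the increment over the whole window, a centered
Gaussian of variance `2` controlled by the Chernoff bound. The union bound and an elementary
estimate of the exponent give the result.
-/

open MeasureTheory ProbabilityTheory Real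

/-- A standard `d`-dimensional Wiener process. -/
def IsBrownianMotionVec {Ω : Type*} [MeasurableSpace Ω] (P : Measure Ω) (d : ℕ)
    (W : ℝ → Ω → Fin d → ℝ) : Prop :=
  (∀ i : Fin d, IsBrownianMotion P (fun t ω => W t ω i)) ∧
  iIndepFun (fun i ω => fun t : ℝ => W t ω i) P

/-- First-passage time of the Poisson process: `N⁻¹(s) = inf {u : N(u) > s}`. -/
noncomputable def firstPassage {Ω : Type*} (N : ℝ → Ω → ℕ) (s : ℝ) (ω : Ω) : ℝ :=
  sInf {u : ℝ | 0 ≤ u ∧ (N u ω : ℝ) > s}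

open scoped NNReal

section Gaussian

variable {Ω : Type*} [MeasurableSpace Ω] {P : Measure Ω}

lemma hasSubgaussianMGF_of_map_eq_gaussianReal {X : Ω → ℝ} {v : ℝ≥0} (hX : AEMeasurable X P)
    (hlaw : P.map X = gaussianReal 0 v) : HasSubgaussianMGF X v P := by
  rw [← HasSubgaussianMGF.id_map_iff hX, hlaw]
  exact ⟨integrable_exp_mul_gaussianReal, fun t => by simp [mgf_id_gaussianReal]⟩

lemma ProbabilityTheory.HasSubgaussianMGF.measure_lt_abs_le [IsFiniteMeasure P] {X : Ω → ℝ}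
    {c : ℝ≥0} (h : HasSubgaussianMGF X c P) {ε : ℝ} (hε : 0 ≤ ε) :
    P {ω | ε < |X ω|} ≤ ENNReal.ofReal (2 * exp (-ε ^ 2 / (2 * c))) := by
  have hsub : {ω | ε < |X ω|} ⊆ {ω | ε ≤ X ω} ∪ {ω | ε ≤ (-X) ω} := by
    intro ω (hω : ε < |X ω|)
    rcases lt_abs.1 hω with hpos | hneg
    exacts [Or.inl hpos.le, Or.inr hneg.le]
  calc P {ω | ε < |X ω|} ≤ P {ω | ε ≤ X ω} + P {ω | ε ≤ (-X) ω} :=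
        (measure_mono hsub).trans (measure_union_le _ _)
    _ = ENNReal.ofReal (P.real {ω | ε ≤ X ω} + P.real {ω | ε ≤ (-X) ω}) := by
        rw [ENNReal.ofReal_add measureReal_nonneg measureReal_nonneg, ofReal_measureReal,
          ofReal_measureReal]
    _ ≤ ENNReal.ofReal (2 * exp (-ε ^ 2 / (2 * c))) := by
        gcongr
        linarith [h.measure_ge_le hε, h.neg.measure_ge_le hε]

lemma gaussianReal_Iic_zero_eq_Ici_zero (v : ℝ≥0) :
    gaussianReal 0 v (Set.Iic 0) = gaussianReal 0 v (Set.Ici 0) := by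
  conv_lhs => rw [← neg_zero, ← gaussianReal_map_neg]
  rw [Measure.map_apply measurable_neg measurableSet_Iic]
  congr 1
  ext x
  simp

lemma inv_two_le_gaussianReal_Ici_zero (v : ℝ≥0) : 2⁻¹ ≤ gaussianReal 0 v (Set.Ici 0) := by
  have h : 1 ≤ gaussianReal 0 v (Set.Ici 0) + gaussianReal 0 v (Set.Iic 0) := by
    rw [← measure_univ (μ := gaussianReal 0 v), ← Set.Ici_union_Iic (a := (0:ℝ))]
    exact measure_union_le _ _
  rw [gaussianReal_Iic_zero_eq_Ici_zero, ← two_mul] at h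
  exact (ENNReal.inv_le_iff_le_mul (by simp) (by simp)).2 h

end Gaussian

section Levy

variable {Ω : Type*} {mΩ : MeasurableSpace Ω} {P : Measure Ω}

lemma measure_union_le_two_mul_of_indep {m₁ m₂ : MeasurableSpace Ω} (hm₁ : m₁ ≤ mΩ)
    (hm₂ : m₂ ≤ mΩ) (hind : Indep m₁ m₂ P) {G₁ G₂ H₁ H₂ : Set Ω} (hG₁ : MeasurableSet[m₁] G₁)
    (hG₂ : MeasurableSet[m₁] G₂) (hH₁ : MeasurableSet[m₂] H₁) (hH₂ : MeasurableSet[m₂] H₂)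
    (hG : Disjoint G₁ G₂) (hH₁_half : 2⁻¹ ≤ P H₁) (hH₂_half : 2⁻¹ ≤ P H₂) :
    P (G₁ ∪ G₂) ≤ 2 * P (G₁ ∩ H₁ ∪ G₂ ∩ H₂) := by
  have hmul := (Indep_iff m₁ m₂ P).1 hind
  rw [measure_union hG (hm₁ _ hG₂), measure_union
    (hG.mono Set.inter_subset_left Set.inter_subset_left) ((hm₁ _ hG₂).inter (hm₂ _ hH₂)),
    hmul _ _ hG₁ hH₁, hmul _ _ hG₂ hH₂]
  calc P G₁ + P G₂ = 2 * (P G₁ * 2⁻¹ + P G₂ * 2⁻¹) := by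
        rw [← add_mul, mul_comm, mul_assoc, ENNReal.inv_mul_cancel two_ne_zero
          ENNReal.ofNat_ne_top, mul_one]
    _ ≤ 2 * (P G₁ * P H₁ + P G₂ * P H₂) := by gcongr

variable {X : ℕ → Ω → ℝ}

lemma measurable_sum_iSup_comap {s : Set ℕ} {t : Finset ℕ} (hts : ∀ i ∈ t, i ∈ s) :
    Measurable[⨆ i ∈ s, MeasurableSpace.comap (X i) inferInstance] fun ω => ∑ i ∈ t, X i ω :=
  Finset.measurable_sum _ fun i hi => (comap_measurable (X i)).mono
    (le_iSup₂ (f := fun i _ => MeasurableSpace.comap (X i) inferInstance) i (hts i hi)) le_rfl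

lemma ProbabilityTheory.iIndepFun.indep_iSup_Iio_iSup_Ici (hX : ∀ i, Measurable (X i))
    (hind : iIndepFun X P) (k : ℕ) :
    Indep (⨆ i ∈ Set.Iio k, MeasurableSpace.comap (X i) inferInstance)
      (⨆ i ∈ Set.Ici k, MeasurableSpace.comap (X i) inferInstance) P :=
  indep_iSup_of_disjoint (fun i => (hX i).comap_le) ((iIndepFun_iff_iIndep _ _ _).1 hind)
    (Set.Iio_disjoint_Ici le_rfl)

/-- The reflection step of Lévy's inequality: given the past up to time `k`, the increment
`S n - S k` has the sign of `S k` with probability at least `1/2`, and then `|S n| ≥ |S k|`. -/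
lemma measure_le_two_mul_measure_inter_lt_abs_sum (hX : ∀ i, Measurable (X i))
    (hind : iIndepFun X P) {k n : ℕ} (hkn : k ≤ n)
    (hmed : 2⁻¹ ≤ P {ω | 0 ≤ ∑ i ∈ Finset.Ico k n, X i ω} ∧
      2⁻¹ ≤ P {ω | ∑ i ∈ Finset.Ico k n, X i ω ≤ 0}) {y : ℝ} {G : Set Ω}
    (hG : MeasurableSet[⨆ i ∈ Set.Iio k, MeasurableSpace.comap (X i) inferInstance] G)
    (hGy : ∀ ω ∈ G, y < |∑ i ∈ Finset.range k, X i ω|) :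
    P G ≤ 2 * P (G ∩ {ω | y < |∑ i ∈ Finset.range n, X i ω|}) := by
  set S : Ω → ℝ := fun ω => ∑ i ∈ Finset.range k, X i ω
  set D : Ω → ℝ := fun ω => ∑ i ∈ Finset.Ico k n, X i ω
  have hSm := measurable_sum_iSup_comap (X := X) (s := Set.Iio k) (t := Finset.range k)
    fun i hi => Finset.mem_range.1 hi
  have hDm := measurable_sum_iSup_comap (X := X) (s := Set.Ici k) (t := Finset.Ico k n)
    fun i hi => (Finset.mem_Ico.1 hi).1
  have hSD : ∀ ω, ∑ i ∈ Finset.range n, X i ω = S ω + D ω := fun ω =>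
    (Finset.sum_range_add_sum_Ico _ hkn).symm
  have hsplit : G = G ∩ S ⁻¹' Set.Ici 0 ∪ G ∩ S ⁻¹' Set.Iio 0 := by
    rw [← Set.inter_union_distrib_left, ← Set.preimage_union, Set.Ici_union_Iio,
      Set.preimage_univ, Set.inter_univ]
  have hle : ∀ s : Set ℕ, ⨆ i ∈ s, MeasurableSpace.comap (X i) inferInstance ≤ mΩ := fun s =>
    iSup₂_le fun i _ => (hX i).comap_le
  conv_lhs => rw [hsplit]
  refine (measure_union_le_two_mul_of_indep (hle _) (hle _) (hind.indep_iSup_Iio_iSup_Ici hX k)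
    (hG.inter (hSm measurableSet_Ici)) (hG.inter (hSm measurableSet_Iio))
    (hDm measurableSet_Ici) (hDm measurableSet_Iic)
    (Set.disjoint_left.2 fun ω h₁ h₂ => (show S ω < 0 from h₂.2).not_ge h₁.2)
    hmed.1 hmed.2).trans ?_
  gcongr
  rintro ω (⟨⟨hω, hS : 0 ≤ S ω⟩, hD : 0 ≤ D ω⟩ | ⟨⟨hω, hS : S ω < 0⟩, hD : D ω ≤ 0⟩) <;>
    have hy := hGy ω hω <;> refine ⟨hω, show y < |_| from ?_⟩ <;> rw [hSD]
  · rw [abs_of_nonneg hS] at hy; rw [abs_of_nonneg (by linarith)]; linarith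
  · rw [abs_of_neg hS] at hy; rw [abs_of_neg (by linarith)]; linarith

theorem levy_maximal_ineq (hX : ∀ i, Measurable (X i)) (hind : iIndepFun X P) {n : ℕ}
    (hmed : ∀ k ≤ n, 2⁻¹ ≤ P {ω | 0 ≤ ∑ i ∈ Finset.Ico k n, X i ω} ∧
      2⁻¹ ≤ P {ω | ∑ i ∈ Finset.Ico k n, X i ω ≤ 0}) (y : ℝ) :
    P {ω | ∃ k ≤ n, y < |∑ i ∈ Finset.range k, X i ω|}
      ≤ 2 * P {ω | y < |∑ i ∈ Finset.range n, X i ω|} := by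
  set S : ℕ → Ω → ℝ := fun k ω => ∑ i ∈ Finset.range k, X i ω
  set A : ℕ → Set Ω := fun k => {ω | k ≤ n ∧ y < |S k ω|}
  set E := {ω | y < |S n ω|}
  have hAm : ∀ j k, j ≤ k →
      MeasurableSet[⨆ i ∈ Set.Iio k, MeasurableSpace.comap (X i) inferInstance] (A j) :=
    fun j k hjk => (MeasurableSet.const _).inter (measurable_sum_iSup_comap
      (fun i hi => (Finset.mem_range.1 hi).trans_le hjk) (measurableSet_lt measurable_const
        measurable_abs))
  have hA : ∀ k, MeasurableSet (A k) := fun k =>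
    iSup₂_le (fun i _ => (hX i).comap_le) _ (hAm k k le_rfl)
  have key : ∀ k, P (disjointed A k) ≤ 2 * P (disjointed A k ∩ E) := by
    intro k
    rcases lt_or_ge n k with hnk | hkn
    · have hAk : A k = ∅ := Set.eq_empty_of_forall_notMem fun ω hω => hω.1.not_gt hnk
      simp [Set.subset_empty_iff.1 (hAk ▸ disjointed_subset A k)]
    refine measure_le_two_mul_measure_inter_lt_abs_sum hX hind hkn (hmed k hkn) ?_
      fun ω hω => (disjointed_subset A k hω).2
    rw [disjointed_eq_inter_compl]
    exact (hAm k k le_rfl).inter (.iInter fun j => .iInter fun hj => (hAm j k hj.le).compl)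
  calc P {ω | ∃ k ≤ n, y < |S k ω|} = P (⋃ k, disjointed A k) := by
        rw [iUnion_disjointed]; congr 1; ext; simp [A]
    _ = ∑' k, P (disjointed A k) :=
        measure_iUnion (disjoint_disjointed A) (MeasurableSet.disjointed hA)
    _ ≤ ∑' k, 2 * P (disjointed A k ∩ E) := ENNReal.tsum_le_tsum key
    _ = 2 * P (⋃ k, disjointed A k ∩ E) := by
        rw [ENNReal.tsum_mul_left, measure_iUnion
          (fun i j hij => (disjoint_disjointed A hij).mono Set.inter_subset_left
            Set.inter_subset_left)
          fun k => (MeasurableSet.disjointed hA k).inter (measurableSet_lt measurable_const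
            (Finset.measurable_sum _ fun i _ => hX i).abs)]
    _ ≤ 2 * P E := by gcongr; exact Set.iUnion_subset fun k => Set.inter_subset_right

end Levy

lemma exists_dyadic_near {a h s : ℝ} (hh : 0 < h) (hs : s ∈ Set.Icc a (a + h)) (m : ℕ) :
    ∃ k : ℕ, k ≤ 2 ^ m ∧ |a + h * k / 2 ^ m - s| ≤ h / 2 ^ m := by
  have h2m : (0 : ℝ) < 2 ^ m := by positivity
  set z := (s - a) * 2 ^ m / h
  have hz : 0 ≤ z := div_nonneg (mul_nonneg (by linarith [hs.1]) h2m.le) hh.le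
  have hz_le : z ≤ 2 ^ m := by
    rw [div_le_iff₀ hh]; nlinarith [hs.2]
  refine ⟨⌊z⌋₊, by exact_mod_cast (Nat.floor_le hz).trans hz_le, ?_⟩
  have hdiff : a + h * ⌊z⌋₊ / 2 ^ m - s = h / 2 ^ m * (⌊z⌋₊ - z) := by
    simp only [z]; field_simp; ring
  rw [hdiff, abs_mul, abs_of_pos (by positivity)]
  refine mul_le_of_le_one_right (by positivity) (abs_le.2 ⟨?_, ?_⟩)
  · linarith [Nat.lt_floor_add_one z]
  · linarith [Nat.floor_le hz]

section BrownianMotion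

variable {Ω : Type*} {mΩ : MeasurableSpace Ω} {P : Measure Ω} {W : ℝ → Ω → ℝ}

lemma IsBrownianMotion.hasSubgaussianMGF_sub (hW : IsBrownianMotion P W) {s t : ℝ}
    (hs : 0 ≤ s) (hst : s ≤ t) :
    HasSubgaussianMGF (fun ω => W t ω - W s ω) (t - s).toNNReal P :=
  hasSubgaussianMGF_of_map_eq_gaussianReal ((hW.1 t).sub (hW.1 s)).aemeasurable
    (hW.2.2.2.1 s t hs hst)

lemma IsBrownianMotion.measure_lt_abs_sub_le [IsFiniteMeasure P] (hW : IsBrownianMotion P W)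
    {s t : ℝ} (hs : 0 ≤ s) (hst : s ≤ t) {y : ℝ} (hy : 0 ≤ y) :
    P {ω | y < |W t ω - W s ω|} ≤ ENNReal.ofReal (2 * exp (-y ^ 2 / (2 * (t - s)))) := by
  simpa [Real.coe_toNNReal _ (sub_nonneg.2 hst)] using
    (hW.hasSubgaussianMGF_sub hs hst).measure_lt_abs_le hy

lemma IsBrownianMotion.inv_two_le_measure_sub_nonneg (hW : IsBrownianMotion P W) {s t : ℝ}
    (hs : 0 ≤ s) (hst : s ≤ t) :
    2⁻¹ ≤ P {ω | 0 ≤ W t ω - W s ω} ∧ 2⁻¹ ≤ P {ω | W t ω - W s ω ≤ 0} := by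
  have hm : Measurable fun ω => W t ω - W s ω := (hW.1 t).sub (hW.1 s)
  have hlaw := hW.2.2.2.1 s t hs hst
  refine ⟨?_, ?_⟩
  · change 2⁻¹ ≤ P ((fun ω => W t ω - W s ω) ⁻¹' Set.Ici 0)
    rw [← Measure.map_apply hm measurableSet_Ici, hlaw]
    exact inv_two_le_gaussianReal_Ici_zero _
  · change 2⁻¹ ≤ P ((fun ω => W t ω - W s ω) ⁻¹' Set.Iic 0)
    rw [← Measure.map_apply hm measurableSet_Iic, hlaw, gaussianReal_Iic_zero_eq_Ici_zero]
    exact inv_two_le_gaussianReal_Ici_zero _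

lemma IsBrownianMotion.measure_exists_lt_abs_sub_le (hW : IsBrownianMotion P W) {τ : ℕ → ℝ}
    (hτ : Monotone τ) (hτ0 : 0 ≤ τ 0) (n : ℕ) (y : ℝ) :
    P {ω | ∃ k ≤ n, y < |W (τ k) ω - W (τ 0) ω|}
      ≤ 2 * P {ω | y < |W (τ n) ω - W (τ 0) ω|} := by
  set X : ℕ → Ω → ℝ := fun i ω => W (τ (i + 1)) ω - W (τ i) ω
  have hsum : ∀ k ω, ∑ i ∈ Finset.range k, X i ω = W (τ k) ω - W (τ 0) ω :=
    fun k ω => Finset.sum_range_sub (fun i => W (τ i) ω) k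
  have hIco : ∀ k ≤ n, ∀ ω, ∑ i ∈ Finset.Ico k n, X i ω = W (τ n) ω - W (τ k) ω :=
    fun k hk ω => Finset.sum_Ico_sub (fun i => W (τ i) ω) hk
  have hmed : ∀ k ≤ n, 2⁻¹ ≤ P {ω | 0 ≤ ∑ i ∈ Finset.Ico k n, X i ω} ∧
      2⁻¹ ≤ P {ω | ∑ i ∈ Finset.Ico k n, X i ω ≤ 0} := fun k hk => by
    simpa only [hIco k hk] using
      hW.inv_two_le_measure_sub_nonneg (hτ0.trans (hτ (Nat.zero_le k))) (hτ hk)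
  simpa only [hsum] using
    levy_maximal_ineq (X := X) (fun i => (hW.1 _).sub (hW.1 _)) (hW.2.2.2.2 τ hτ hτ0) hmed y

lemma IsBrownianMotion.measure_exists_Icc_lt_abs_sub_le [IsProbabilityMeasure P]
    (hW : IsBrownianMotion P W) {a h : ℝ} (ha : 0 ≤ a) (hh : 0 < h) {y : ℝ} (hy : 0 ≤ y) :
    P {ω | ∃ s ∈ Set.Icc a (a + h), y < |W s ω - W a ω|}
      ≤ ENNReal.ofReal (4 * exp (-y ^ 2 / (2 * h))) := by
  set τ : ℕ → ℕ → ℝ := fun m k => a + h * k / 2 ^ m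
  set V : ℕ → Set Ω := fun m => {ω | ∃ k ≤ 2 ^ m, y < |W (τ m k) ω - W a ω|}
  have hV_mono : Monotone V := monotone_nat_of_le_succ fun m ω ⟨k, hk, hω⟩ => by
    refine ⟨2 * k, by rw [pow_succ]; omega, ?_⟩
    convert hω using 4
    simp only [τ]; push_cast; field_simp; ring
  have hcover : {ω | ∃ s ∈ Set.Icc a (a + h), y < |W s ω - W a ω|} ≤ᵐ[P] ⋃ m, V m := by
    filter_upwards [hW.2.2.1] with ω hcont ⟨s, hs, hys⟩
    choose k hk hnear using exists_dyadic_near hh hs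
    have hdecay : Filter.Tendsto (fun m : ℕ => h / 2 ^ m) Filter.atTop (nhds 0) :=
      tendsto_const_nhds.div_atTop (tendsto_pow_atTop_atTop_of_one_lt one_lt_two)
    have hlim : Filter.Tendsto (fun m => τ m (k m)) Filter.atTop (nhds s) :=
      tendsto_iff_dist_tendsto_zero.2 (squeeze_zero (fun _ => dist_nonneg) hnear hdecay)
    have hopen : IsOpen {r | y < |W r ω - W a ω|} :=
      isOpen_lt continuous_const (hcont.sub continuous_const).abs
    obtain ⟨m, hm⟩ := (hlim.eventually (hopen.mem_nhds hys)).exists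
    exact Set.mem_iUnion.2 ⟨m, k m, hk m, hm⟩
  have hV_le : ∀ m, P (V m) ≤ ENNReal.ofReal (4 * exp (-y ^ 2 / (2 * h))) := fun m => by
    have hτ : Monotone (τ m) := fun i j hij => by simp only [τ]; gcongr
    have hτ0 : τ m 0 = a := by simp [τ]
    have hτn : τ m (2 ^ m) = a + h := by simp [τ]
    calc P (V m) ≤ 2 * P {ω | y < |W (τ m (2 ^ m)) ω - W (τ m 0) ω|} := by
          simpa only [hτ0] using hW.measure_exists_lt_abs_sub_le hτ (hτ0 ▸ ha) (2 ^ m) y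
      _ ≤ 2 * ENNReal.ofReal (2 * exp (-y ^ 2 / (2 * h))) := by
          gcongr
          simpa only [hτ0, hτn, add_sub_cancel_left] using
            hW.measure_lt_abs_sub_le ha (le_add_of_nonneg_right hh.le) hy
      _ = ENNReal.ofReal (4 * exp (-y ^ 2 / (2 * h))) := by
          rw [← ENNReal.ofReal_ofNat 2, ← ENNReal.ofReal_mul zero_le_two]; ring_nf
  calc P _ ≤ P (⋃ m, V m) := measure_mono_ae hcover
    _ = ⨆ m, P (V m) := hV_mono.measure_iUnion
    _ ≤ _ := iSup_le hV_le

end BrownianMotion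

lemma exists_nat_Icc_lt_abs_sub {f : ℝ → ℝ} {a b y : ℝ} (ha : 0 ≤ a) (hb : 0 ≤ b)
    (hab : |a - b| ≤ 1) (hf : 2 * y < |f a - f b|) :
    ∃ j : ℕ, (j : ℝ) ≤ b ∧ ∃ s ∈ Set.Icc (j : ℝ) (j + 2), y < |f s - f j| := by
  set j := ⌊min a b⌋₊
  have hj : (j : ℝ) ≤ min a b := Nat.floor_le (le_min ha hb)
  have hj' : min a b < j + 1 := Nat.lt_floor_add_one _
  have hmax : max a b ≤ min a b + 1 := by linarith [max_sub_min_eq_abs' a b]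
  have hmem : ∀ s, (s = a ∨ s = b) → s ∈ Set.Icc (j : ℝ) (j + 2) := by
    rintro s (rfl | rfl)
    · exact ⟨hj.trans (min_le_left _ _), by linarith [le_max_left s b]⟩
    · exact ⟨hj.trans (min_le_right _ _), by linarith [le_max_right a s]⟩
  refine ⟨j, hj.trans (min_le_right _ _), ?_⟩
  by_contra! hle
  have := abs_sub_le (f a) (f j) (f b)
  rw [abs_sub_comm (f j)] at this
  linarith [hle a (hmem a (.inl rfl)), hle b (hmem b (.inr rfl))]

lemma exists_coord_window_lt_abs_sub {d : ℕ} {w : ℝ → Fin d → ℝ} {a b T c : ℝ} (ha : 0 ≤ a)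
    (hb : 0 ≤ b) (hbT : b ≤ T) (hab : |a - b| ≤ 1) (hc : 0 ≤ c) (hw : c < ‖w a - w b‖) :
    ∃ i, ∃ j ≤ ⌊T⌋₊, ∃ s ∈ Set.Icc (j : ℝ) (j + 2), c / 2 < |w s i - w j i| := by
  obtain ⟨i, hi⟩ : ∃ i, c < |w a i - w b i| := by
    by_contra! h
    exact hw.not_ge ((pi_norm_le_iff_of_nonneg hc).2 h)
  obtain ⟨j, hj, hs⟩ := exists_nat_Icc_lt_abs_sub (f := fun s => w s i) (y := c / 2) ha hb hab
    (by linarith)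
  exact ⟨i, j, Nat.le_floor (hj.trans hbT), hs⟩

lemma log_add_le_sq_div {d L x : ℝ} (hd : 1 ≤ d) (hL : 1 ≤ L) (hx : 0 ≤ x) :
    log d + L + x / (3 * d) ≤ 1 / 2 + (3 * d * L + x) ^ 2 / 16 := by
  have hlog : log d ≤ d - 1 := log_le_sub_one_of_pos (by linarith)
  have hxd : x / (3 * d) ≤ 3 * d * L * x / 8 := by
    rw [div_le_iff₀ (by linarith)]
    nlinarith [mul_le_mul_of_nonneg_left (show (1:ℝ) ≤ d * d * L by nlinarith) hx]
  nlinarith [mul_nonneg (sub_nonneg.2 hd) (sub_nonneg.2 hL), sq_nonneg (3 * d * L - 8 / 3),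
    sq_nonneg x, mul_nonneg (mul_nonneg (by linarith : (0:ℝ) ≤ d) (by linarith : (0:ℝ) ≤ L)) hx]

lemma covering_union_bound_le {d M : ℕ} (hd : 0 < d) {γ t x : ℝ} (hγ : 0 < γ)
    (ht : exp 1 ≤ t) (hx : 0 ≤ x) (hM : (M : ℝ) ≤ t / γ) :
    d * (M + 1) * (4 * exp (-((3 * d * log t + x) / 2) ^ 2 / (2 * 2)))
      ≤ 4 * (γ⁻¹ + (exp 1)⁻¹) * exp (1 / 2 - x / (3 * d)) := by
  have ht0 : 0 < t := (exp_pos 1).trans_le ht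
  have hd1 : (1 : ℝ) ≤ d := by exact_mod_cast hd
  set E := exp (-((3 * d * log t + x) / 2) ^ 2 / (2 * 2))
  have hdtE : d * t * E ≤ exp (1 / 2 - x / (3 * d)) := by
    rw [← exp_log (by positivity : (0:ℝ) < d * t), ← exp_add, exp_le_exp,
      log_mul (by positivity) ht0.ne']
    linarith [log_add_le_sq_div hd1 ((le_log_iff_exp_le ht0).2 ht) hx]
  have hM1 : (M : ℝ) + 1 ≤ (γ⁻¹ + (exp 1)⁻¹) * t := by
    rw [add_mul, inv_mul_eq_div, inv_mul_eq_div]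
    linarith [(one_le_div (exp_pos 1)).2 ht]
  calc d * (M + 1) * (4 * E) ≤ d * ((γ⁻¹ + (exp 1)⁻¹) * t) * (4 * E) := by gcongr
    _ = 4 * (γ⁻¹ + (exp 1)⁻¹) * (d * t * E) := by ring
    _ ≤ 4 * (γ⁻¹ + (exp 1)⁻¹) * exp (1 / 2 - x / (3 * d)) := by gcongr

theorem stmt14_general
    {Ω : Type*} [MeasurableSpace Ω] (P : Measure Ω) [IsProbabilityMeasure P]
    (d : ℕ) (hd : 0 < d)
    (Wstar : ℝ → Ω → Fin d → ℝ) (hW : IsBrownianMotionVec P d Wstar)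
    (γ : ℝ) (hγ : 0 < γ)
    (N : ℝ → Ω → ℕ)
    (t x : ℝ) (ht : Real.exp 1 ≤ t) (hx : 0 ≤ x)
    (hclose : ∀ ω, ∀ u : ℝ, 0 ≤ u → u ≤ t →
      |u / γ - (N (firstPassage N (u / γ) ω) ω : ℝ)| ≤ 1) :
    P {ω | ∃ u : ℝ, 0 ≤ u ∧ u ≤ t ∧
        ‖Wstar ((N (firstPassage N (u / γ) ω) ω : ℝ)) ω - Wstar (u / γ) ω‖
          > 3 * d * Real.log t + x}
      ≤ ENNReal.ofReal (4 * (γ⁻¹ + (Real.exp 1)⁻¹)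
          * Real.exp (1 / 2 - x / (3 * d))) := by
  set c := 3 * d * log t + x
  have hc : 0 ≤ c := by
    have : 0 ≤ log t := log_nonneg (by linarith [add_one_le_exp (1 : ℝ)])
    positivity
  set M := ⌊t / γ⌋₊
  have hM : (M : ℝ) ≤ t / γ := Nat.floor_le (div_nonneg (by linarith [exp_pos 1]) hγ.le)
  set A : Fin d → ℕ → Set Ω := fun i j =>
    {ω | ∃ s ∈ Set.Icc (j : ℝ) (j + 2), c / 2 < |Wstar s ω i - Wstar j ω i|}
  set B := 4 * exp (-(c / 2) ^ 2 / (2 * 2))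
  have hcover : {ω | ∃ u : ℝ, 0 ≤ u ∧ u ≤ t ∧
      ‖Wstar ((N (firstPassage N (u / γ) ω) ω : ℝ)) ω - Wstar (u / γ) ω‖ > c}
      ⊆ ⋃ i, ⋃ j ∈ Finset.range (M + 1), A i j := by
    rintro ω ⟨u, hu0, hut, hnorm⟩
    obtain ⟨i, j, hj, hA⟩ := exists_coord_window_lt_abs_sub (w := fun s => Wstar s ω)
      (Nat.cast_nonneg _) (div_nonneg hu0 hγ.le) (div_le_div_of_nonneg_right hut hγ.le)
      (by rw [abs_sub_comm]; exact hclose ω u hu0 hut) hc hnorm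
    simp only [Set.mem_iUnion, Finset.mem_range, Nat.lt_succ_iff]
    exact ⟨i, j, hj, hA⟩
  calc P _ ≤ ∑ i, ∑ j ∈ Finset.range (M + 1), P (A i j) :=
        (measure_mono hcover).trans ((measure_iUnion_fintype_le _ _).trans
          (Finset.sum_le_sum fun i _ => measure_biUnion_finset_le _ _))
    _ ≤ ∑ i : Fin d, ∑ j ∈ Finset.range (M + 1), ENNReal.ofReal B := by
        gcongr with i _ j _
        exact (hW.1 i).measure_exists_Icc_lt_abs_sub_le (Nat.cast_nonneg j) two_pos
          (by positivity)
    _ = ENNReal.ofReal (d * (M + 1) * B) := by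
        rw [← Nat.cast_add_one, ← Nat.cast_mul, ENNReal.ofReal_mul (Nat.cast_nonneg _),
          ENNReal.ofReal_natCast]
        simp only [Finset.sum_const, Finset.card_range, Finset.card_univ, Fintype.card_fin,
          nsmul_eq_mul, Nat.cast_mul, mul_assoc]
    _ ≤ _ := ENNReal.ofReal_le_ofReal (covering_union_bound_le hd hγ ht hx hM)

/-- bound for the term `Φ₇`. With `y(u) = N⁻¹(u/γ)` and the deterministic
bound `|u/γ − N(y(u))| ≤ 1`, for `t ≥ e`, `x ≥ 0` (max norm on `Fin d → ℝ`):
`P(sup_{u ≤ t} |W*_{N(y(u))} − W*_{u/γ}| > 3d log t + x) ≤ 4(γ⁻¹ + e⁻¹) e^{1/2 − x/(3d)}`. -/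
theorem stmt14
    {Ω : Type*} [MeasurableSpace Ω] (P : Measure Ω) [IsProbabilityMeasure P]
    (d : ℕ) (hd : 0 < d)
    (Wstar : ℝ → Ω → Fin d → ℝ) (hW : IsBrownianMotionVec P d Wstar)
    (lam γ : ℝ) (hlam : 0 < lam) (hγ : 0 < γ)
    (N : ℝ → Ω → ℕ) (hN : IsPoissonProcess P N lam)
    (t x : ℝ) (ht : Real.exp 1 ≤ t) (hx : 0 ≤ x)
    (hclose : ∀ ω, ∀ u : ℝ, 0 ≤ u → u ≤ t →
      |u / γ - (N (firstPassage N (u / γ) ω) ω : ℝ)| ≤ 1) :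
    P {ω | ∃ u : ℝ, 0 ≤ u ∧ u ≤ t ∧
        ‖Wstar ((N (firstPassage N (u / γ) ω) ω : ℝ)) ω - Wstar (u / γ) ω‖
          > 3 * d * Real.log t + x}
      ≤ ENNReal.ofReal (4 * (γ⁻¹ + (Real.exp 1)⁻¹)
          * Real.exp (1 / 2 - x / (3 * d))) :=
  stmt14_general P d hd Wstar hW γ hγ N t x ht hx hclose
end
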